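/- (Zeros of derivatives of the cos^{2K} kernel, upper bound) Let h(θ) = C_K cos^{2K}(θ/2) with K ≥ 1. For each n with 0 ≤ n ≤ 2K-1, the n-th derivative h^{(n)} has exactly n zeros (counted without multiplicity) in the open interval (-π, π); equivalently, h^{(n)}(θ) = 0 for exactly n values of θ in (-π, π). -/

import Mathlib

/-!
The `n`-th derivative of `cos (θ / 2) ^ m` is `2⁻ⁿ cos (θ / 2) ^ (m - n) Pₙ(sin (θ / 2))` with
`deg Pₙ ≤ n` and `Pₙ ≠ 0` for `n ≤ m`. On `(-π, π)` the cosine factor is positive and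
`sin (θ / 2)` is injective, so there are at most `n` zeros. Conversely every derivative of order
`< m` vanishes at `±π`, so Rolle's theorem applied `n` times, starting from the two zeros `±π`,
produces `n` distinct zeros inside.
-/

open Real Polynomial Set

theorem exists_finset_deriv_eq_zero_of_eq_zero {g : ℝ → ℝ} {a b : ℝ}
    (hg : ContinuousOn g (Icc a b)) {t : Finset ℝ} (ht : ↑t ⊆ Icc a b)
    (hzero : ∀ x ∈ t, g x = 0) :
    ∃ u : Finset ℝ, ↑u ⊆ Ioo a b ∧ (∀ y ∈ u, deriv g y = 0) ∧ t.card ≤ u.card + 1 := by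
  classical
  induction t using Finset.induction_on_max generalizing b with
  | empty => exact ⟨∅, by simp⟩
  | insert x s hlt ih =>
    obtain rfl | hs := s.eq_empty_or_nonempty
    · exact ⟨∅, by simp⟩
    set y := s.max' hs
    have hy : y ∈ s := s.max'_mem hs
    have hxab : x ∈ Icc a b := ht (Finset.mem_insert_self x s)
    have hyab : y ∈ Icc a b := ht (Finset.mem_insert_of_mem hy)
    obtain ⟨u, hu, hderiv, hcard⟩ := ih (hg.mono (Icc_subset_Icc_right hyab.2))
      (fun z hz => ⟨(ht (Finset.mem_insert_of_mem hz)).1, s.le_max' z hz⟩)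
      (fun z hz => hzero z (Finset.mem_insert_of_mem hz))
    obtain ⟨c, hc, hc0⟩ := exists_deriv_eq_zero (hlt y hy)
      (hg.mono (Icc_subset_Icc hyab.1 hxab.2))
      ((hzero y (Finset.mem_insert_of_mem hy)).trans (hzero x (Finset.mem_insert_self x s)).symm)
    have hcu : c ∉ u := fun hcu => (hu hcu).2.not_gt hc.1
    refine ⟨insert c u, ?_, ?_, ?_⟩
    · rw [Finset.coe_insert]
      exact insert_subset ⟨hyab.1.trans_lt hc.1, hc.2.trans_le hxab.2⟩
        (hu.trans (Ioo_subset_Ioo_right hyab.2))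
    · simpa [hc0] using hderiv
    · rw [Finset.card_insert_of_notMem (fun hx => (hlt x hx).false),
        Finset.card_insert_of_notMem hcu]
      omega

theorem exists_finset_iteratedDeriv_eq_zero {f : ℝ → ℝ} {a b : ℝ} (hab : a < b) {n : ℕ}
    (hf : ContDiff ℝ n f) (ha : ∀ j < n, iteratedDeriv j f a = 0)
    (hb : ∀ j < n, iteratedDeriv j f b = 0) :
    ∃ s : Finset ℝ, ↑s ⊆ Ioo a b ∧ n ≤ s.card ∧ ∀ x ∈ s, iteratedDeriv n f x = 0 := by
  classical
  suffices ∀ j ≤ n, ∃ s : Finset ℝ, ↑s ⊆ Ioo a b ∧ j ≤ s.card ∧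
      ∀ x ∈ s, iteratedDeriv j f x = 0 from this n le_rfl
  intro j
  induction j with
  | zero => exact fun _ => ⟨∅, by simp⟩
  | succ j ih =>
    intro hj
    obtain ⟨s, hs, hcard, hzero⟩ := ih (by omega)
    have has : a ∉ insert b s := by
      simp only [Finset.mem_insert, not_or]
      exact ⟨hab.ne, fun h => (hs h).1.false⟩
    have hbs : b ∉ s := fun h => (hs h).2.false
    have hcont : ContinuousOn (iteratedDeriv j f) (Icc a b) :=
      (hf.continuous_iteratedDeriv j (by exact_mod_cast (by omega : j ≤ n))).continuousOn
    obtain ⟨u, hu, hderiv, hucard⟩ := exists_finset_deriv_eq_zero_of_eq_zero hcont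
      (t := insert a (insert b s))
      (by simpa [insert_subset_iff, hab.le] using hs.trans Ioo_subset_Icc_self)
      (by simpa [ha j hj, hb j hj] using hzero)
    refine ⟨u, hu, ?_, fun x hx => by rw [iteratedDeriv_succ]; exact hderiv x hx⟩
    rw [Finset.card_insert_of_notMem has, Finset.card_insert_of_notMem hbs] at hucard
    omega

theorem finite_and_ncard_le_natDegree_of_mapsTo_rootSet {α R : Type*} [CommRing R] [IsDomain R]
    {s : Set α} {φ : α → R} {p : R[X]} (hφ : InjOn φ s) (hs : MapsTo φ s (p.rootSet R)) :
    s.Finite ∧ s.ncard ≤ p.natDegree :=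
  ⟨.of_injOn hs hφ (p.rootSet_finite R),
    (ncard_le_ncard_of_injOn φ hs hφ (p.rootSet_finite R)).trans (p.ncard_rootSet_le R)⟩

theorem injOn_sin_half : InjOn (fun θ => sin (θ / 2)) (Ioo (-π) π) := fun x hx y hy hxy => by
  have := injOn_sin ⟨by linarith [hx.1], by linarith [hx.2]⟩
    ⟨by linarith [hy.1], by linarith [hy.2]⟩ hxy
  linarith

noncomputable def cosHalfPowDerivPoly (m : ℕ) : ℕ → ℝ[X]
  | 0 => 1
  | n + 1 => C (-((m : ℝ) - n)) * X * cosHalfPowDerivPoly m n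
      + (1 - X ^ 2) * derivative (cosHalfPowDerivPoly m n)

namespace cosHalfPowDerivPoly

variable (m : ℕ)

theorem natDegree_le (n : ℕ) : (cosHalfPowDerivPoly m n).natDegree ≤ n := by
  induction n with
  | zero => simp [cosHalfPowDerivPoly]
  | succ n ih =>
    rw [cosHalfPowDerivPoly]
    refine natDegree_add_le_of_degree_le ?_ ?_
    · have hCX : (C (-((m : ℝ) - n)) * X).natDegree ≤ 1 :=
        (natDegree_C_mul_le _ _).trans natDegree_X_le
      exact (natDegree_mul_le_of_le hCX ih).trans (by omega)
    · rcases n with _ | n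
      · simp [cosHalfPowDerivPoly]
      · have hX2 : ((1 : ℝ[X]) - X ^ 2).natDegree ≤ 2 := by compute_degree
        have hP' := (natDegree_derivative_le _).trans (Nat.sub_le_sub_right ih 1)
        exact (natDegree_mul_le_of_le hX2 hP').trans (by omega)

theorem eval_one_ne_zero {n : ℕ} (hn : n ≤ m) : (cosHalfPowDerivPoly m n).eval 1 ≠ 0 := by
  induction n with
  | zero => simp [cosHalfPowDerivPoly]
  | succ n ih =>
    have hnm : (n : ℝ) < m := by exact_mod_cast hn
    simp only [cosHalfPowDerivPoly, eval_add, eval_mul, eval_C, eval_X, eval_sub, eval_one,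
      eval_pow, one_pow, sub_self, zero_mul, add_zero, mul_one]
    exact mul_ne_zero (by linarith) (ih (by omega))

theorem ne_zero {n : ℕ} (hn : n ≤ m) : cosHalfPowDerivPoly m n ≠ 0 :=
  fun h => eval_one_ne_zero m hn (by simp [h])

end cosHalfPowDerivPoly

theorem hasDerivAt_cos_half_pow_mul_eval_sin (m : ℕ) (q : ℝ[X]) (θ : ℝ) :
    HasDerivAt (fun θ => cos (θ / 2) ^ (m + 1) * q.eval (sin (θ / 2)))
      ((1 / 2) * cos (θ / 2) ^ m *
        (C (-((m : ℝ) + 1)) * X * q + (1 - X ^ 2) * derivative q).eval (sin (θ / 2))) θ := by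
  have hhalf : HasDerivAt (fun θ : ℝ => θ / 2) (1 / 2) θ := by
    simpa using (hasDerivAt_id θ).div_const 2
  have hcos : HasDerivAt (fun θ => cos (θ / 2) ^ (m + 1))
      ((m + 1 : ℕ) * cos (θ / 2) ^ m * (-sin (θ / 2) * (1 / 2))) θ :=
    (((hasDerivAt_cos (θ / 2)).comp θ hhalf).pow (m + 1) :)
  have hsin : HasDerivAt (fun θ => q.eval (sin (θ / 2)))
      ((derivative q).eval (sin (θ / 2)) * (cos (θ / 2) * (1 / 2))) θ :=
    ((q.hasDerivAt (sin (θ / 2))).comp θ ((hasDerivAt_sin (θ / 2)).comp θ hhalf) :)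
  refine (hcos.mul hsin).congr_deriv ?_
  simp only [eval_add, eval_mul, eval_C, eval_X, eval_sub, eval_one, eval_pow, ← cos_sq',
    Nat.cast_add, Nat.cast_one]
  ring

section

variable {m n : ℕ}

theorem iteratedDeriv_cos_half_pow (hn : n ≤ m) :
    iteratedDeriv n (fun θ => cos (θ / 2) ^ m) = fun θ =>
      (1 / 2) ^ n * cos (θ / 2) ^ (m - n) * (cosHalfPowDerivPoly m n).eval (sin (θ / 2)) := by
  induction n with
  | zero => simp [cosHalfPowDerivPoly]
  | succ n ih =>
    obtain ⟨k, hk⟩ : ∃ k, m - n = k + 1 := ⟨m - (n + 1), by omega⟩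
    have hkm : (k : ℝ) + 1 = m - n := by rw [← Nat.cast_sub (by omega), hk, Nat.cast_succ]
    have hd := hasDerivAt_cos_half_pow_mul_eval_sin k (cosHalfPowDerivPoly m n)
    rw [iteratedDeriv_succ, ih (by omega), hk]
    funext θ
    simp_rw [mul_assoc]
    rw [deriv_const_mul _ (hd θ).differentiableAt, (hd θ).deriv, hkm, cosHalfPowDerivPoly,
      show m - (n + 1) = k by omega]
    ring

theorem iteratedDeriv_cos_half_pow_eq_zero (hn : n < m) {θ : ℝ} (hθ : cos (θ / 2) = 0) :
    iteratedDeriv n (fun θ => cos (θ / 2) ^ m) θ = 0 := by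
  simp [iteratedDeriv_cos_half_pow hn.le, hθ, Nat.sub_ne_zero_of_lt hn]

theorem finite_and_ncard_le_zeros_iteratedDeriv_cos_half_pow (hn : n ≤ m) :
    {θ | θ ∈ Ioo (-π) π ∧ iteratedDeriv n (fun θ => cos (θ / 2) ^ m) θ = 0}.Finite ∧
      {θ | θ ∈ Ioo (-π) π ∧ iteratedDeriv n (fun θ => cos (θ / 2) ^ m) θ = 0}.ncard ≤ n := by
  refine (finite_and_ncard_le_natDegree_of_mapsTo_rootSet (injOn_sin_half.mono fun _ hθ => hθ.1)
    ?_).imp_right (·.trans (cosHalfPowDerivPoly.natDegree_le m n))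
  rintro θ ⟨hθ, hzero⟩
  have hcos : 0 < cos (θ / 2) := cos_pos_of_mem_Ioo ⟨by linarith [hθ.1], by linarith [hθ.2]⟩
  rw [iteratedDeriv_cos_half_pow hn] at hzero
  rw [mem_rootSet_of_ne (cosHalfPowDerivPoly.ne_zero m hn), coe_aeval_eq_eval]
  simpa [hcos.ne'] using hzero

theorem exists_finset_zeros_iteratedDeriv_cos_half_pow (hn : n ≤ m) :
    ∃ s : Finset ℝ, ↑s ⊆ Ioo (-π) π ∧ n ≤ s.card ∧
      ∀ θ ∈ s, iteratedDeriv n (fun θ => cos (θ / 2) ^ m) θ = 0 := by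
  have hcos_pi : cos (π / 2) = 0 := cos_pi_div_two
  have hcos_neg_pi : cos (-π / 2) = 0 := by rw [neg_div, cos_neg, hcos_pi]
  exact exists_finset_iteratedDeriv_eq_zero (neg_lt_self pi_pos) (by fun_prop)
    (fun j hj => iteratedDeriv_cos_half_pow_eq_zero (hj.trans_le hn) hcos_neg_pi)
    (fun j hj => iteratedDeriv_cos_half_pow_eq_zero (hj.trans_le hn) hcos_pi)

theorem zeros_iteratedDeriv_cos_half_pow (hn : n ≤ m) :
    {θ | θ ∈ Ioo (-π) π ∧ iteratedDeriv n (fun θ => cos (θ / 2) ^ m) θ = 0}.Finite ∧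
      {θ | θ ∈ Ioo (-π) π ∧ iteratedDeriv n (fun θ => cos (θ / 2) ^ m) θ = 0}.ncard = n := by
  obtain ⟨hfin, hle⟩ := finite_and_ncard_le_zeros_iteratedDeriv_cos_half_pow hn
  obtain ⟨s, hs, hcard, hzero⟩ := exists_finset_zeros_iteratedDeriv_cos_half_pow hn
  refine ⟨hfin, hle.antisymm (hcard.trans ?_)⟩
  rw [← ncard_coe_finset]
  exact ncard_le_ncard (fun θ hθ => ⟨hs hθ, hzero θ hθ⟩) hfin

end

theorem cos_pow_kernel_deriv_zeros_exact_general (K : ℕ)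
    (C : ℝ) (hC : C = (2 : ℝ) ^ (2 * (K : ℤ) - 1) / (((2 * K).choose K : ℝ) * π))
    (h : ℝ → ℝ) (hh : h = fun θ => C * (Real.cos (θ / 2)) ^ (2 * K))
    (n : ℕ) (hn : n ≤ 2 * K - 1) :
    ({θ : ℝ | θ ∈ Set.Ioo (-π) π ∧ iteratedDeriv n h θ = 0}).Finite ∧
    ({θ : ℝ | θ ∈ Set.Ioo (-π) π ∧ iteratedDeriv n h θ = 0}).ncard = n := by
  have hC0 : C ≠ 0 := by
    have : (0 : ℝ) < (2 * K).choose K := by exact_mod_cast Nat.choose_pos (by omega)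
    rw [hC]
    positivity
  simp only [hh, iteratedDeriv_const_mul_field, mul_eq_zero, hC0, false_or]
  exact zeros_iteratedDeriv_cos_half_pow (by omega)

theorem cos_pow_kernel_deriv_zeros_exact (K : ℕ) (hK : 1 ≤ K)
    (C : ℝ) (hC : C = (2 : ℝ) ^ (2 * (K : ℤ) - 1) / (((2 * K).choose K : ℝ) * π))
    (h : ℝ → ℝ) (hh : h = fun θ => C * (Real.cos (θ / 2)) ^ (2 * K))
    (n : ℕ) (hn : n ≤ 2 * K - 1) :
    ({θ : ℝ | θ ∈ Set.Ioo (-π) π ∧ iteratedDeriv n h θ = 0}).Finite ∧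
    ({θ : ℝ | θ ∈ Set.Ioo (-π) π ∧ iteratedDeriv n h θ = 0}).ncard = n :=
  cos_pow_kernel_deriv_zeros_exact_general K C hC h hh n hn
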